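/- Correctness of the replacement step of the local-improvement MDS algorithm: let D be a dominating set of a multilayer network M, let a ∈ D, let c ∈ A be a candidate replacement, and set D' = (D \ {a}) ∪ {c}. Suppose c dominates every node exclusively covered by a, namely: for every actor x ∉ D' and every layer l in which x is represented, if every element of D adjacent to x in the graph of layer l is equal to a, then c is adjacent to x in the graph of layer l. Then D' is a dominating set of M. -/
import Mathlib


/-- A multilayer network on actors `A` with layers `L`: each layer has a
presence predicate and a simple undirected graph whose edges join only
actors present in that layer. -/
structure MultilayerNetwork (A L : Type*) where
  present : L → A → Prop
  G : L → SimpleGraph A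
  adj_present : ∀ l a b, (G l).Adj a b → present l a ∧ present l b

/-- `D` is a dominating set of the multilayer network `M`: every actor is
either in `D`, or, in every layer where it is represented, adjacent to some
member of `D`. -/
def IsDomSet {A L : Type*} (M : MultilayerNetwork A L) (D : Finset A) : Prop :=
  ∀ a : A, a ∈ D ∨ ∀ l : L, M.present l a → ∃ d ∈ D, (M.G l).Adj d a

/-- Correctness of the replacement step of the local-improvement MDS
algorithm: replacing `a ∈ D` by a candidate `c` that covers every node
exclusively dominated by `a` yields a dominating set. -/
theorem replacement_step_isDomSet {A L : Type*} [DecidableEq A]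
    (M : MultilayerNetwork A L) (D : Finset A)
    (hD : IsDomSet M D) (a : A) (ha : a ∈ D) (c : A)
    (D' : Finset A) (hD' : D' = insert c (D.erase a))
    (hcov : ∀ x : A, x ∉ D' → ∀ l : L, M.present l x →
      (∀ d ∈ D, (M.G l).Adj d x → d = a) → (M.G l).Adj c x) :
    IsDomSet M D' := by
  intro x
  by_cases hx : x ∈ D'
  · exact Or.inl hx
  · right
    intro l hl
    by_cases hex : ∀ d ∈ D, (M.G l).Adj d x → d = a
    · exact ⟨c, by simp [hD'], hcov x hx l hl hex⟩
    · push_neg at hex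
      obtain ⟨d, hdD, hadj, hda⟩ := hex
      exact ⟨d, by simp [hD', Finset.mem_erase, hda, hdD], hadj⟩
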